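/- For every k ≥ 0, the assigned vector 𝒮(p_k) is well defined and equals R_{(a,b),(c,d)} for a unique quadruple with c, d ≥ 1, a+c ≤ t, b+d ≤ U and a = 0 or b = 0; moreover, writing 𝒮(p_{k+1}) = R_{(a,b),(c,d)}, one has R_{δ(a,b,c,d)} − 𝒮(p_k) ∈ F. That is, applying the rectangle rule δ to the vector assigned to p_{k+1} recovers the vector assigned to p_k modulo the frozen subgroup F (the lattice path tracks the inverse rectangle dynamics). -/

import Mathlib

namespace Stmt14

/-- First component of `κ(x, y)`: `i` if `⌈x/t⌉` is odd, `i^c = t - i` otherwise. -/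
def kap1 (t i x : ℕ) : ℕ := if ((x + t - 1) / t) % 2 = 1 then i else t - i

/-- Second component of `κ(x, y)`: `j` if `⌈y/U⌉` is odd, `j^c = U - j` otherwise. -/
def kap2 (U j y : ℕ) : ℕ := if ((y + U - 1) / U) % 2 = 1 then j else U - j

/-- One step of the lattice-path recursion: from `p_k` produce `p_{k+1}`. -/
def next (t U i j : ℕ) (P : ℕ × ℕ) : ℕ × ℕ :=
  if t ∣ P.1 ∧ U ∣ P.2 then
    (P.1 + (t - kap1 t i P.1), P.2 + (U - kap2 U j P.2))
  else
    let s := min (t - P.1 % t) (U - P.2 % U)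
    let u := P.1 + s
    let v := P.2 + s
    if t ∣ u ∧ ¬U ∣ v then (u + (if (u / t) % 2 = 1 then t - i else i), v)
    else if U ∣ v ∧ ¬t ∣ u then (u, v + (if (v / U) % 2 = 1 then U - j else j))
    else (u, v)

/-- The sequence of points `p_0 = (i, j)`, `p_{k+1} = next p_k`. -/
def path (t U i j : ℕ) : ℕ → ℕ × ℕ
  | 0 => (i, j)
  | k + 1 => next t U i j (path t U i j k)

/-- `V = ℤ^B`, vectors indexed by the (1-indexed) boxes of the `t × U` rectangle. -/
abbrev V : Type := ℕ × ℕ → ℤ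

/-- `R_{(a,b),(c,d)} = ∑_{a < i' ≤ a+c, b < j' ≤ b+d} e_{(i',j')}`. -/
def R (a b c d : ℕ) : V := fun q =>
  if a < q.1 ∧ q.1 ≤ a + c ∧ b < q.2 ∧ q.2 ≤ b + d then 1 else 0

/-- `R` applied to a quadruple. -/
def Rq (q : ℕ × ℕ × ℕ × ℕ) : V := R q.1 q.2.1 q.2.2.1 q.2.2.2

/-- The subgroup `F` generated by the frozen vectors `R_{(0,0),(c,U)}` (`1 ≤ c ≤ t`)
and `R_{(0,0),(t,d)}` (`1 ≤ d ≤ U`). -/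
def frozen (t U : ℕ) : AddSubgroup V :=
  AddSubgroup.closure
    ({v | ∃ c, 1 ≤ c ∧ c ≤ t ∧ v = R 0 0 c U} ∪ {v | ∃ d, 1 ≤ d ∧ d ≤ U ∧ v = R 0 0 t d})

/-- The rectangle rule `δ` on quadruples `(a,b,c,d)` with `a = 0` or `b = 0`. -/
def delta (t U : ℕ) : ℕ × ℕ × ℕ × ℕ → ℕ × ℕ × ℕ × ℕ
  | (a, b, c, d) =>
    if a = 0 then (c - min b c, b - min b c, t - c, d)
    else (a - min a d, d - min a d, c, U - d)

/-- The vector `𝒮(p)` assigned to a point `p = (x, y)`: if `t ∤ x` and `U ∤ y` then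
`R_{(x̄ - p, ȳ - q),(p,q)}` with `(p,q) = κ(x,y)`; if `t ∣ x` and `U ∣ y` then
`R_{(0, U - q),(t - p, q)}`. -/
def SVec (t U i j : ℕ) (P : ℕ × ℕ) : V :=
  if t ∣ P.1 ∧ U ∣ P.2 then
    R 0 (U - kap2 U j P.2) (t - kap1 t i P.1) (kap2 U j P.2)
  else
    R (P.1 % t - kap1 t i P.1) (P.2 % U - kap2 U j P.2) (kap1 t i P.1) (kap2 U j P.2)

/-- Admissible quadruples: `c, d ≥ 1`, `a + c ≤ t`, `b + d ≤ U`, and `a = 0` or `b = 0`. -/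
def good (t U : ℕ) (q : ℕ × ℕ × ℕ × ℕ) : Prop :=
  1 ≤ q.2.2.1 ∧ 1 ≤ q.2.2.2 ∧ q.1 + q.2.2.1 ≤ t ∧ q.2.1 + q.2.2.2 ≤ U ∧
    (q.1 = 0 ∨ q.2.1 = 0)


/-!
Every point `p_k` is either a grid corner (`t ∣ x` and `U ∣ y`) or lies inside a cell with the
rectangle `𝒮(p_k)` touching the left or the lower side of the `t × U` box. Along a step each
coordinate either stays inside its cell (so `κ` is unchanged), runs up to a grid line (`κ` is
unchanged and the reflection `ι` or `ȷ` is the complement of `κ`), or leaves a grid line (`κ` is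
replaced by its complement). A case analysis on which grid line the diagonal move meets first then
gives `δ(𝒮(p_{k+1})) = 𝒮(p_k)` on the nose, except when `p_k` is a corner; there the two differ
by a full-height strip minus a full-width strip, which lies in `F`.
-/

section Arithmetic

variable {t i : ℕ}

lemma ceil_div_mul_add {q r : ℕ} (hr0 : 0 < r) (hrt : r ≤ t) :
    (t * q + r + t - 1) / t = q + 1 := by
  have ht : 0 < t := by omega
  have h : t * q + r + t - 1 = t * (q + 1) + (r - 1) := by rw [Nat.mul_succ]; omega
  rw [h, Nat.mul_add_div ht, Nat.div_eq_of_lt (by omega)]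

lemma kap1_mul_add {q r : ℕ} (hr0 : 0 < r) (hrt : r ≤ t) :
    kap1 t i (t * q + r) = if q % 2 = 0 then i else t - i := by
  rw [kap1, ceil_div_mul_add hr0 hrt]
  split_ifs <;> omega

lemma kap1_mul (ht : 0 < t) (q : ℕ) : kap1 t i (t * q) = if q % 2 = 1 then i else t - i := by
  rcases q with _ | q
  · simp [kap1, Nat.div_eq_of_lt (by omega : t - 1 < t)]
  · rw [Nat.mul_succ, kap1_mul_add ht le_rfl]
    split_ifs <;> omega

lemma kap1_pos_lt (hi0 : 0 < i) (hit : i < t) (x : ℕ) : 0 < kap1 t i x ∧ kap1 t i x < t := by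
  unfold kap1; split <;> omega

lemma kap1_self (hi0 : 0 < i) (hit : i < t) : kap1 t i i = i := by
  simpa using kap1_mul_add (i := i) (q := 0) hi0 hit.le

lemma kap2_eq_kap1 (U j y : ℕ) : kap2 U j y = kap1 U j y := rfl

lemma kap2_pos_lt {U j : ℕ} (hj0 : 0 < j) (hjU : j < U) (y : ℕ) :
    0 < kap2 U j y ∧ kap2 U j y < U :=
  kap1_pos_lt hj0 hjU y

lemma mod_pos_of_not_dvd {x : ℕ} (hx : ¬ t ∣ x) : 0 < x % t :=
  Nat.pos_of_ne_zero fun h => hx (Nat.dvd_of_mod_eq_zero h)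

lemma not_dvd_add_of_dvd {x e : ℕ} (hx : t ∣ x) (he0 : 0 < e) (het : e < t) :
    ¬ t ∣ x + e := by
  rw [Nat.dvd_add_right hx]; exact Nat.not_dvd_of_pos_of_lt he0 het

lemma add_mod_of_dvd {x e : ℕ} (hx : t ∣ x) (het : e < t) : (x + e) % t = e := by
  obtain ⟨q, rfl⟩ := hx; rw [Nat.mul_add_mod, Nat.mod_eq_of_lt het]

lemma kap1_add_of_dvd {x e : ℕ} (hx : t ∣ x) (he0 : 0 < e) (het : e < t) (hit : i ≤ t) :
    kap1 t i (x + e) = t - kap1 t i x := by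
  obtain ⟨q, rfl⟩ := hx
  rw [kap1_mul_add he0 het.le, kap1_mul (by omega)]
  split_ifs <;> omega

lemma add_mod_of_mod_add_lt {x s : ℕ} (hs : x % t + s < t) : (x + s) % t = x % t + s := by
  have hst : s % t = s := Nat.mod_eq_of_lt (by omega)
  rw [Nat.add_mod_of_add_mod_lt (by rwa [hst]), hst]

lemma not_dvd_add_of_mod_add_lt {x s : ℕ} (hx : ¬ t ∣ x) (hs : x % t + s < t) :
    ¬ t ∣ x + s := by
  rw [Nat.dvd_iff_mod_eq_zero, add_mod_of_mod_add_lt hs]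
  have := mod_pos_of_not_dvd hx
  omega

lemma kap1_add_of_mod_add_le {x s : ℕ} (hx : ¬ t ∣ x) (hs : x % t + s ≤ t) :
    kap1 t i (x + s) = kap1 t i x := by
  have hx0 := mod_pos_of_not_dvd hx
  have hsplit := Nat.div_add_mod x t
  have h : x + s = t * (x / t) + (x % t + s) := by omega
  have h' : kap1 t i x = kap1 t i (t * (x / t) + x % t) := by rw [hsplit]
  rw [h, h', kap1_mul_add (by omega) hs, kap1_mul_add hx0 (Nat.mod_lt _ (by omega)).le]

lemma dvd_add_sub_mod (ht : 0 < t) (x : ℕ) : t ∣ x + (t - x % t) := by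
  have := Nat.div_add_mod x t
  have := Nat.mod_lt x ht
  exact ⟨x / t + 1, by rw [Nat.mul_succ]; omega⟩

/-- The reflection `ι` (or `ȷ`) chosen by `next` on reaching the grid line `u`. -/
lemma reflection_eq_sub_kap1 {u : ℕ} (hu : t ∣ u) (hit : i ≤ t) :
    (if u / t % 2 = 1 then t - i else i) = t - kap1 t i u := by
  rcases Nat.eq_zero_or_pos t with rfl | ht
  · obtain rfl : i = 0 := by omega
    simp
  · obtain ⟨q, rfl⟩ := hu
    rw [kap1_mul ht, Nat.mul_div_cancel_left q ht]
    split_ifs <;> omega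

end Arithmetic

section Frozen

variable {t U : ℕ}

lemma R_zero_width (a b d : ℕ) : R a b 0 d = 0 := by
  funext z; simp only [R, Pi.zero_apply]; rw [if_neg (by omega)]

lemma R_zero_height (a b c : ℕ) : R a b c 0 = 0 := by
  funext z; simp only [R, Pi.zero_apply]; rw [if_neg (by omega)]

lemma R_full_height_mem_frozen {c : ℕ} (hc : c ≤ t) : R 0 0 c U ∈ frozen t U := by
  rcases Nat.eq_zero_or_pos c with rfl | hc0
  · rw [R_zero_width]; exact zero_mem _
  · exact AddSubgroup.subset_closure (Or.inl ⟨c, hc0, hc, rfl⟩)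

lemma R_full_width_mem_frozen {d : ℕ} (hd : d ≤ U) : R 0 0 t d ∈ frozen t U := by
  rcases Nat.eq_zero_or_pos d with rfl | hd0
  · rw [R_zero_height]; exact zero_mem _
  · exact AddSubgroup.subset_closure (Or.inr ⟨d, hd0, hd, rfl⟩)

lemma R_vertical_strip_mem_frozen {a c : ℕ} (h : a + c ≤ t) : R a 0 c U ∈ frozen t U := by
  have e : R a 0 c U = R 0 0 (a + c) U - R 0 0 a U := by
    funext z; simp only [R, Pi.sub_apply]; split_ifs <;> omega
  rw [e]
  exact sub_mem (R_full_height_mem_frozen h) (R_full_height_mem_frozen (by omega))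

lemma R_horizontal_strip_mem_frozen {b d : ℕ} (h : b + d ≤ U) : R 0 b t d ∈ frozen t U := by
  have e : R 0 b t d = R 0 0 t (b + d) - R 0 0 t b := by
    funext z; simp only [R, Pi.sub_apply]; split_ifs <;> omega
  rw [e]
  exact sub_mem (R_full_width_mem_frozen h) (R_full_width_mem_frozen (by omega))

end Frozen

lemma R_injective {a b c d a' b' c' d' : ℕ} (hc : 1 ≤ c) (hd : 1 ≤ d) (hc' : 1 ≤ c')
    (hd' : 1 ≤ d') (h : R a b c d = R a' b' c' d') : a = a' ∧ b = b' ∧ c = c' ∧ d = d' := by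
  have e1 := congrFun h (a + 1, b + 1)
  have e2 := congrFun h (a' + 1, b' + 1)
  have e3 := congrFun h (a + c, b + d)
  have e4 := congrFun h (a' + c', b' + d')
  simp only [R] at e1 e2 e3 e4
  split_ifs at e1 e2 e3 e4 <;> omega

lemma Rq_injOn_good {t U : ℕ} {q q' : ℕ × ℕ × ℕ × ℕ} (hq : good t U q)
    (hq' : good t U q') (h : Rq q = Rq q') : q = q' := by
  obtain ⟨a, b, c, d⟩ := q
  obtain ⟨a', b', c', d'⟩ := q'
  obtain ⟨rfl, rfl, rfl, rfl⟩ := R_injective hq.1 hq.2.1 hq'.1 hq'.2.1 h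
  rfl

section Delta

variable {t U : ℕ}

lemma delta_zero_fst (b c d : ℕ) :
    delta t U (0, b, c, d) = (c - min b c, b - min b c, t - c, d) :=
  rfl

lemma delta_of_fst_ne_zero {a : ℕ} (ha : a ≠ 0) (b c d : ℕ) :
    delta t U (a, b, c, d) = (a - min a d, d - min a d, c, U - d) := by
  simp only [delta, if_neg ha]

end Delta

def quad (t U i j : ℕ) (P : ℕ × ℕ) : ℕ × ℕ × ℕ × ℕ :=
  if t ∣ P.1 ∧ U ∣ P.2 then
    (0, U - kap2 U j P.2, t - kap1 t i P.1, kap2 U j P.2)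
  else
    (P.1 % t - kap1 t i P.1, P.2 % U - kap2 U j P.2, kap1 t i P.1, kap2 U j P.2)

section Quad

variable {t U i j : ℕ}

lemma SVec_eq_Rq_quad (P : ℕ × ℕ) : SVec t U i j P = Rq (quad t U i j P) := by
  unfold SVec quad
  split <;> rfl

lemma quad_of_dvd {x y : ℕ} (hx : t ∣ x) (hy : U ∣ y) :
    quad t U i j (x, y) = (0, U - kap2 U j y, t - kap1 t i x, kap2 U j y) :=
  if_pos ⟨hx, hy⟩

lemma quad_of_not_dvd_fst {x y : ℕ} (hx : ¬ t ∣ x) :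
    quad t U i j (x, y) = (x % t - kap1 t i x, y % U - kap2 U j y, kap1 t i x, kap2 U j y) :=
  if_neg fun h => hx h.1

end Quad

/-- Either `P` is a grid corner, or `P` is inside a cell and the rectangle of `𝒮(P)` is a genuine
sub-rectangle of the box (no truncated subtraction in `quad`) touching its left or lower side. -/
def PathInvariant (t U i j : ℕ) (P : ℕ × ℕ) : Prop :=
  (t ∣ P.1 ∧ U ∣ P.2) ∨
    (¬ t ∣ P.1 ∧ ¬ U ∣ P.2 ∧ kap1 t i P.1 ≤ P.1 % t ∧ kap2 U j P.2 ≤ P.2 % U ∧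
      (P.1 % t = kap1 t i P.1 ∨ P.2 % U = kap2 U j P.2))

def DeltaRecovers (t U i j : ℕ) (P P' : ℕ × ℕ) : Prop :=
  Rq (delta t U (quad t U i j P')) - Rq (quad t U i j P) ∈ frozen t U

section Invariant

variable {t U i j : ℕ}

lemma PathInvariant.dvd_iff {P : ℕ × ℕ} (h : PathInvariant t U i j P) :
    t ∣ P.1 ↔ U ∣ P.2 := by
  rcases h with ⟨hx, hy⟩ | ⟨hx, hy, -⟩ <;> tauto

lemma pathInvariant_init (hi0 : 0 < i) (hit : i < t) (hj0 : 0 < j) (hjU : j < U) :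
    PathInvariant t U i j (i, j) := by
  have hκx : kap1 t i i = i := kap1_self hi0 hit
  have hκy : kap2 U j j = j := kap1_self hj0 hjU
  refine Or.inr ⟨Nat.not_dvd_of_pos_of_lt hi0 hit, Nat.not_dvd_of_pos_of_lt hj0 hjU, ?_⟩
  simp [hκx, hκy, Nat.mod_eq_of_lt hit, Nat.mod_eq_of_lt hjU]

lemma good_quad (hi0 : 0 < i) (hit : i < t) (hj0 : 0 < j) (hjU : j < U) {P : ℕ × ℕ}
    (h : PathInvariant t U i j P) : good t U (quad t U i j P) := by
  obtain ⟨x, y⟩ := P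
  have hκx := kap1_pos_lt hi0 hit x
  have hκy := kap2_pos_lt hj0 hjU y
  rcases h with ⟨hx, hy⟩ | ⟨hx, -, h⟩ <;> dsimp only at *
  · rw [quad_of_dvd hx hy]
    refine ⟨?_, ?_, ?_, ?_, Or.inl rfl⟩ <;> dsimp only <;> omega
  · have := Nat.mod_lt x (by omega : 0 < t)
    have := Nat.mod_lt y (by omega : 0 < U)
    rw [quad_of_not_dvd_fst hx]
    simp only [good]
    omega

lemma SVec_eq_Rq_iff (hi0 : 0 < i) (hit : i < t) (hj0 : 0 < j) (hjU : j < U) {P : ℕ × ℕ}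
    (h : PathInvariant t U i j P) {q : ℕ × ℕ × ℕ × ℕ} (hq : good t U q) :
    SVec t U i j P = Rq q ↔ q = quad t U i j P := by
  rw [SVec_eq_Rq_quad]
  exact ⟨fun e => Rq_injOn_good hq (good_quad hi0 hit hj0 hjU h) e.symm, fun e => e ▸ rfl⟩

lemma deltaRecovers_of_delta_eq {P P' : ℕ × ℕ}
    (h : delta t U (quad t U i j P') = quad t U i j P) : DeltaRecovers t U i j P P' := by
  rw [DeltaRecovers, h, sub_self]
  exact zero_mem _

end Invariant

lemma R_sub_R_eq_strips (a b c d : ℕ) :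
    R a 0 c b - R 0 b a d = R a 0 c (b + d) - R 0 b (a + c) d := by
  funext z; simp only [R, Pi.sub_apply]; split_ifs <;> omega

section Next

variable {t U i j x y : ℕ}

lemma next_of_dvd (hx : t ∣ x) (hy : U ∣ y) :
    next t U i j (x, y) = (x + (t - kap1 t i x), y + (U - kap2 U j y)) :=
  if_pos ⟨hx, hy⟩

lemma next_of_sub_mod_lt (hit : i < t) (hx : ¬ t ∣ x) (hy : ¬ U ∣ y)
    (h : t - x % t < U - y % U) :
    next t U i j (x, y) = (x + (t - x % t) + (t - kap1 t i x), y + (t - x % t)) := by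
  have := Nat.mod_lt x (by omega : 0 < t)
  have hu : t ∣ x + (t - x % t) := dvd_add_sub_mod (by omega) x
  have hv : ¬ U ∣ y + (t - x % t) := not_dvd_add_of_mod_add_lt hy (by omega)
  rw [next, if_neg fun h => hx h.1, min_eq_left h.le]
  dsimp only
  rw [if_pos ⟨hu, hv⟩, reflection_eq_sub_kap1 hu hit.le, kap1_add_of_mod_add_le hx (by omega)]

lemma next_of_sub_mod_gt (hjU : j < U) (hx : ¬ t ∣ x) (hy : ¬ U ∣ y)
    (h : U - y % U < t - x % t) :
    next t U i j (x, y) = (x + (U - y % U), y + (U - y % U) + (U - kap2 U j y)) := by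
  have := Nat.mod_lt y (by omega : 0 < U)
  have hu : ¬ t ∣ x + (U - y % U) := not_dvd_add_of_mod_add_lt hx (by omega)
  have hv : U ∣ y + (U - y % U) := dvd_add_sub_mod (by omega) y
  rw [next, if_neg fun h => hx h.1, min_eq_right h.le]
  dsimp only
  rw [if_neg fun h => h.2 hv, if_pos ⟨hv, hu⟩, reflection_eq_sub_kap1 hv hjU.le,
    kap1_add_of_mod_add_le hy (by omega), kap2_eq_kap1]

lemma next_of_sub_mod_eq (ht : 0 < t) (hU : 0 < U) (hx : ¬ t ∣ x)
    (h : t - x % t = U - y % U) :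
    next t U i j (x, y) = (x + (t - x % t), y + (t - x % t)) := by
  have hu : t ∣ x + (t - x % t) := dvd_add_sub_mod ht x
  have hv : U ∣ y + (t - x % t) := h ▸ dvd_add_sub_mod hU y
  rw [next, if_neg fun h => hx h.1, min_eq_left h.le]
  dsimp only
  rw [if_neg fun h => h.2 hv, if_neg fun h => h.2 hu]

end Next

section Step

variable {t U i j x y : ℕ}

lemma step_of_dvd (hi0 : 0 < i) (hit : i < t) (hj0 : 0 < j) (hjU : j < U)
    (hx : t ∣ x) (hy : U ∣ y) :
    PathInvariant t U i j (x + (t - kap1 t i x), y + (U - kap2 U j y)) ∧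
      DeltaRecovers t U i j (x, y) (x + (t - kap1 t i x), y + (U - kap2 U j y)) := by
  obtain ⟨hκx0, hκxt⟩ := kap1_pos_lt hi0 hit x
  obtain ⟨hκy0, hκyU⟩ := kap2_pos_lt hj0 hjU y
  have hx' : ¬ t ∣ x + (t - kap1 t i x) := not_dvd_add_of_dvd hx (by omega) (by omega)
  have hy' : ¬ U ∣ y + (U - kap2 U j y) := not_dvd_add_of_dvd hy (by omega) (by omega)
  have hmx : (x + (t - kap1 t i x)) % t = t - kap1 t i x := add_mod_of_dvd hx (by omega)
  have hmy : (y + (U - kap2 U j y)) % U = U - kap2 U j y := add_mod_of_dvd hy (by omega)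
  have hkx : kap1 t i (x + (t - kap1 t i x)) = t - kap1 t i x :=
    kap1_add_of_dvd hx (by omega) (by omega) hit.le
  have hky : kap2 U j (y + (U - kap2 U j y)) = U - kap2 U j y :=
    kap1_add_of_dvd hy (by omega) (by omega) hjU.le
  refine ⟨Or.inr ⟨hx', hy', ?_⟩, ?_⟩
  · dsimp only
    rw [hmx, hmy, hkx, hky]
    omega
  · have hδ : delta t U (0, 0, t - kap1 t i x, U - kap2 U j y)
        = (t - kap1 t i x, 0, kap1 t i x, U - kap2 U j y) := by
      rw [delta_zero_fst]
      simp only [Prod.mk.injEq, and_true]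
      omega
    rw [DeltaRecovers, quad_of_not_dvd_fst hx', quad_of_dvd hx hy, hmx, hmy, hkx, hky,
      Nat.sub_self, Nat.sub_self, hδ]
    dsimp only [Rq]
    rw [R_sub_R_eq_strips, Nat.sub_add_cancel hκyU.le, Nat.sub_add_cancel hκxt.le]
    exact sub_mem (R_vertical_strip_mem_frozen (by omega))
      (R_horizontal_strip_mem_frozen (by omega))

lemma step_of_sub_mod_lt (hi0 : 0 < i) (hit : i < t) (hj0 : 0 < j) (hjU : j < U)
    (h : PathInvariant t U i j (x, y)) (hx : ¬ t ∣ x) (hlt : t - x % t < U - y % U) :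
    PathInvariant t U i j (x + (t - x % t) + (t - kap1 t i x), y + (t - x % t)) ∧
      DeltaRecovers t U i j (x, y) (x + (t - x % t) + (t - kap1 t i x), y + (t - x % t)) := by
  obtain ⟨-, hy, hxy⟩ := h.resolve_left fun h => hx h.1
  dsimp only at hy hxy
  obtain ⟨hκx0, hκxt⟩ := kap1_pos_lt hi0 hit x
  obtain ⟨hκy0, hκyU⟩ := kap2_pos_lt hj0 hjU y
  have := Nat.mod_lt x (by omega : 0 < t)
  have := Nat.mod_lt y (by omega : 0 < U)
  have hu : t ∣ x + (t - x % t) := dvd_add_sub_mod (by omega) x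
  have hx' : ¬ t ∣ x + (t - x % t) + (t - kap1 t i x) :=
    not_dvd_add_of_dvd hu (by omega) (by omega)
  have hmx : (x + (t - x % t) + (t - kap1 t i x)) % t = t - kap1 t i x :=
    add_mod_of_dvd hu (by omega)
  have hkx : kap1 t i (x + (t - x % t) + (t - kap1 t i x)) = t - kap1 t i x := by
    rw [kap1_add_of_dvd hu (by omega) (by omega) hit.le,
      kap1_add_of_mod_add_le (s := t - x % t) hx (by omega)]
  have hy' : ¬ U ∣ y + (t - x % t) := not_dvd_add_of_mod_add_lt hy (by omega)
  have hmy : (y + (t - x % t)) % U = y % U + (t - x % t) := add_mod_of_mod_add_lt (by omega)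
  have hky : kap2 U j (y + (t - x % t)) = kap2 U j y := kap1_add_of_mod_add_le hy (by omega)
  refine ⟨Or.inr ⟨hx', hy', ?_⟩, deltaRecovers_of_delta_eq ?_⟩
  · dsimp only
    rw [hmx, hkx, hmy, hky]
    omega
  · rw [quad_of_not_dvd_fst hx', quad_of_not_dvd_fst hx, hmx, hkx, hmy, hky, Nat.sub_self,
      delta_zero_fst]
    simp only [Prod.mk.injEq, and_true]
    omega

lemma step_of_sub_mod_gt (hi0 : 0 < i) (hit : i < t) (hj0 : 0 < j) (hjU : j < U)
    (h : PathInvariant t U i j (x, y)) (hx : ¬ t ∣ x) (hgt : U - y % U < t - x % t) :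
    PathInvariant t U i j (x + (U - y % U), y + (U - y % U) + (U - kap2 U j y)) ∧
      DeltaRecovers t U i j (x, y) (x + (U - y % U), y + (U - y % U) + (U - kap2 U j y)) := by
  obtain ⟨-, hy, hxy⟩ := h.resolve_left fun h => hx h.1
  dsimp only at hy hxy
  obtain ⟨hκx0, hκxt⟩ := kap1_pos_lt hi0 hit x
  obtain ⟨hκy0, hκyU⟩ := kap2_pos_lt hj0 hjU y
  have := Nat.mod_lt x (by omega : 0 < t)
  have := Nat.mod_lt y (by omega : 0 < U)
  have hv : U ∣ y + (U - y % U) := dvd_add_sub_mod (by omega) y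
  have hy' : ¬ U ∣ y + (U - y % U) + (U - kap2 U j y) :=
    not_dvd_add_of_dvd hv (by omega) (by omega)
  have hmy : (y + (U - y % U) + (U - kap2 U j y)) % U = U - kap2 U j y :=
    add_mod_of_dvd hv (by omega)
  have hky : kap2 U j (y + (U - y % U) + (U - kap2 U j y)) = U - kap2 U j y := by
    rw [kap2_eq_kap1, kap1_add_of_dvd hv (by omega) (by omega) hjU.le,
      kap1_add_of_mod_add_le (s := U - y % U) hy (by omega), kap2_eq_kap1]
  have hx' : ¬ t ∣ x + (U - y % U) := not_dvd_add_of_mod_add_lt hx (by omega)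
  have hmx : (x + (U - y % U)) % t = x % t + (U - y % U) := add_mod_of_mod_add_lt (by omega)
  have hkx : kap1 t i (x + (U - y % U)) = kap1 t i x := kap1_add_of_mod_add_le hx (by omega)
  refine ⟨Or.inr ⟨hx', hy', ?_⟩, deltaRecovers_of_delta_eq ?_⟩
  · dsimp only
    rw [hmx, hkx, hmy, hky]
    omega
  · rw [quad_of_not_dvd_fst hx', quad_of_not_dvd_fst hx, hmx, hkx, hmy, hky, Nat.sub_self,
      delta_of_fst_ne_zero (by omega)]
    simp only [Prod.mk.injEq, true_and]
    omega

lemma step_of_sub_mod_eq (hi0 : 0 < i) (hit : i < t) (hj0 : 0 < j) (hjU : j < U)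
    (h : PathInvariant t U i j (x, y)) (hx : ¬ t ∣ x) (heq : t - x % t = U - y % U) :
    PathInvariant t U i j (x + (t - x % t), y + (t - x % t)) ∧
      DeltaRecovers t U i j (x, y) (x + (t - x % t), y + (t - x % t)) := by
  obtain ⟨-, hy, hxy⟩ := h.resolve_left fun h => hx h.1
  dsimp only at hy hxy
  obtain ⟨hκx0, hκxt⟩ := kap1_pos_lt hi0 hit x
  obtain ⟨hκy0, hκyU⟩ := kap2_pos_lt hj0 hjU y
  have := Nat.mod_lt x (by omega : 0 < t)
  have := Nat.mod_lt y (by omega : 0 < U)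
  have hu : t ∣ x + (t - x % t) := dvd_add_sub_mod (by omega) x
  have hv : U ∣ y + (t - x % t) := heq ▸ dvd_add_sub_mod (by omega) y
  have hkx : kap1 t i (x + (t - x % t)) = kap1 t i x := kap1_add_of_mod_add_le hx (by omega)
  have hky : kap2 U j (y + (t - x % t)) = kap2 U j y := kap1_add_of_mod_add_le hy (by omega)
  refine ⟨Or.inl ⟨hu, hv⟩, deltaRecovers_of_delta_eq ?_⟩
  rw [quad_of_dvd hu hv, quad_of_not_dvd_fst hx, hkx, hky, delta_zero_fst]
  simp only [Prod.mk.injEq, and_true]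
  omega

lemma PathInvariant.step (hi0 : 0 < i) (hit : i < t) (hj0 : 0 < j) (hjU : j < U) {P : ℕ × ℕ}
    (h : PathInvariant t U i j P) :
    PathInvariant t U i j (next t U i j P) ∧ DeltaRecovers t U i j P (next t U i j P) := by
  obtain ⟨x, y⟩ := P
  rcases h with ⟨hx, hy⟩ | hxy
  · rw [next_of_dvd hx hy]
    exact step_of_dvd hi0 hit hj0 hjU hx hy
  · obtain ⟨hx, hy, -⟩ := id hxy
    rcases lt_trichotomy (t - x % t) (U - y % U) with hlt | heq | hgt
    · rw [next_of_sub_mod_lt hit hx hy hlt]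
      exact step_of_sub_mod_lt hi0 hit hj0 hjU (Or.inr hxy) hx hlt
    · rw [next_of_sub_mod_eq (by omega) (by omega) hx heq]
      exact step_of_sub_mod_eq hi0 hit hj0 hjU (Or.inr hxy) hx heq
    · rw [next_of_sub_mod_gt hjU hx hy hgt]
      exact step_of_sub_mod_gt hi0 hit hj0 hjU (Or.inr hxy) hx hgt

end Step

lemma pathInvariant_path {t U i j : ℕ} (hi0 : 0 < i) (hit : i < t) (hj0 : 0 < j) (hjU : j < U)
    (k : ℕ) : PathInvariant t U i j (path t U i j k) := by
  induction k with
  | zero => exact pathInvariant_init hi0 hit hj0 hjU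
  | succ k ih => exact (ih.step hi0 hit hj0 hjU).1

theorem stmt14 (n t i j : ℕ)
    (hi0 : 0 < i) (hit : i < t) (hj0 : 0 < j) (hjU : j < n - t + 1) (k : ℕ) :
    -- `𝒮(p_k)` is well defined: `p_k` lies on both families of lines or on neither
    (t ∣ (path t (n - t + 1) i j k).1 ↔ (n - t + 1) ∣ (path t (n - t + 1) i j k).2) ∧
    -- `𝒮(p_k) = R_q` for a unique admissible quadruple `q`
    (∃! q : ℕ × ℕ × ℕ × ℕ, good t (n - t + 1) q ∧
      SVec t (n - t + 1) i j (path t (n - t + 1) i j k) = Rq q) ∧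
    -- the rectangle rule applied to `𝒮(p_{k+1})` recovers `𝒮(p_k)` modulo `F`
    (∀ q : ℕ × ℕ × ℕ × ℕ, good t (n - t + 1) q →
      SVec t (n - t + 1) i j (path t (n - t + 1) i j (k + 1)) = Rq q →
      Rq (delta t (n - t + 1) q) - SVec t (n - t + 1) i j (path t (n - t + 1) i j k)
        ∈ frozen t (n - t + 1)) := by
  have hP := pathInvariant_path hi0 hit hj0 hjU
  refine ⟨(hP k).dvd_iff, ⟨_, ⟨good_quad hi0 hit hj0 hjU (hP k), SVec_eq_Rq_quad _⟩,
    fun q hq => (SVec_eq_Rq_iff hi0 hit hj0 hjU (hP k) hq.1).1 hq.2⟩, fun q hq hS => ?_⟩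
  rw [(SVec_eq_Rq_iff hi0 hit hj0 hjU (hP (k + 1)) hq).1 hS, SVec_eq_Rq_quad]
  exact ((hP k).step hi0 hit hj0 hjU).2

end Stmt14
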